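/- arXiv:1405.0274 — 4 statements merged into one kernel-verified Lean document; each statement's English description precedes it below -/
import Mathlib

section
/- Let ρ : ℝ × ℝ² → ℝ be smooth with ρ(t,x) > 0 everywhere, let u, B : ℝ × ℝ² → ℝ² be smooth, and let A : ℝ × ℝ² → M₂(ℝ) be smooth. Assume: (i) the continuity equation ∂ₜρ + div(ρu) = 0; (ii) the two-dimensional induction equation ∂ₜB = ∇×(u × B) together with div B = 0, where u × B := u₁B₂ − u₂B₁ and ∇×φ := (∂₂φ, −∂₁φ) for scalar φ; (iii) ∂ₜA + (u·∇)A + A(∇u) = 0, where (∇u)ᵢⱼ = ∂ⱼuᵢ. Then the vector field w := ρ⁻¹ A·B (matrix A applied to the column vector B) is transported by the flow: ∂ₜw + (u·∇)w = 0 pointwise on ℝ × ℝ². -/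
/-- Time derivative of a function on spacetime `ℝ × ℝ²`. -/
noncomputable def Dt (f : ℝ × ℝ × ℝ → ℝ) : ℝ × ℝ × ℝ → ℝ := fun p => fderiv ℝ f p (1, 0, 0)

/-- Spatial partial derivative in `x₁`. -/
noncomputable def Dx1 (f : ℝ × ℝ × ℝ → ℝ) : ℝ × ℝ × ℝ → ℝ := fun p => fderiv ℝ f p (0, 1, 0)

/-- Spatial partial derivative in `x₂`. -/
noncomputable def Dx2 (f : ℝ × ℝ × ℝ → ℝ) : ℝ × ℝ × ℝ → ℝ := fun p => fderiv ℝ f p (0, 0, 1)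

/-- The spatial Jacobian matrix of a velocity field `u`, `(∇u)ᵢⱼ = ∂ⱼuᵢ`. -/
noncomputable def gradU (u : ℝ × ℝ × ℝ → ℝ × ℝ) (p : ℝ × ℝ × ℝ) : Matrix (Fin 2) (Fin 2) ℝ :=
  !![Dx1 (fun q => (u q).1) p, Dx2 (fun q => (u q).1) p;
     Dx1 (fun q => (u q).2) p, Dx2 (fun q => (u q).2) p]

/-- Pointwise directional-derivative version of the sum rule. -/
lemma fdv_add {f g : ℝ × ℝ × ℝ → ℝ} {p : ℝ × ℝ × ℝ}
    (hf : DifferentiableAt ℝ f p) (hg : DifferentiableAt ℝ g p) (v : ℝ × ℝ × ℝ) :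
    fderiv ℝ (fun q => f q + g q) p v = fderiv ℝ f p v + fderiv ℝ g p v := by
  rw [fderiv_fun_add hf hg]; rfl

/-- Pointwise directional-derivative version of the difference rule. -/
lemma fdv_sub {f g : ℝ × ℝ × ℝ → ℝ} {p : ℝ × ℝ × ℝ}
    (hf : DifferentiableAt ℝ f p) (hg : DifferentiableAt ℝ g p) (v : ℝ × ℝ × ℝ) :
    fderiv ℝ (fun q => f q - g q) p v = fderiv ℝ f p v - fderiv ℝ g p v := by
  rw [fderiv_fun_sub hf hg]; rfl

/-- Pointwise directional-derivative version of the product rule. -/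
lemma fdv_mul {f g : ℝ × ℝ × ℝ → ℝ} {p : ℝ × ℝ × ℝ}
    (hf : DifferentiableAt ℝ f p) (hg : DifferentiableAt ℝ g p) (v : ℝ × ℝ × ℝ) :
    fderiv ℝ (fun q => f q * g q) p v
      = f p * fderiv ℝ g p v + g p * fderiv ℝ f p v := by
  rw [fderiv_fun_mul hf hg]
  simp [ContinuousLinearMap.add_apply, ContinuousLinearMap.smul_apply, smul_eq_mul]

/-- Pointwise directional-derivative version of the reciprocal rule. -/
lemma fdv_inv {g : ℝ × ℝ × ℝ → ℝ} {p : ℝ × ℝ × ℝ}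
    (hg : DifferentiableAt ℝ g p) (h0 : g p ≠ 0) (v : ℝ × ℝ × ℝ) :
    fderiv ℝ (fun q => (g q)⁻¹) p v = -(fderiv ℝ g p v) / (g p) ^ 2 := by
  have h : HasFDerivAt (fun q => (g q)⁻¹) ((-(g p ^ 2)⁻¹) • fderiv ℝ g p) p := by
    have := (hasDerivAt_inv h0).comp_hasFDerivAt p hg.hasFDerivAt
    exact this
  rw [h.fderiv]
  simp [ContinuousLinearMap.smul_apply, smul_eq_mul]
  field_simp

/-- Pointwise directional-derivative version of the quotient rule. -/
lemma fdv_div {f g : ℝ × ℝ × ℝ → ℝ} {p : ℝ × ℝ × ℝ}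
    (hf : DifferentiableAt ℝ f p) (hg : DifferentiableAt ℝ g p) (h0 : g p ≠ 0) (v : ℝ × ℝ × ℝ) :
    fderiv ℝ (fun q => f q / g q) p v
      = (g p * fderiv ℝ f p v - f p * fderiv ℝ g p v) / (g p) ^ 2 := by
  simp only [div_eq_mul_inv]
  rw [fdv_mul (g := fun q => (g q)⁻¹) hf (hg.inv h0), fdv_inv hg h0]
  field_simp
  ring

/-- Proposition 1.1 of the paper in Eulerian form: under the continuity equation,
the 2D induction equation with `div B = 0`, and the equation
`∂ₜA + (u·∇)A + A(∇u) = 0` for the inverse deformation gradient,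
the vector field `w = ρ⁻¹ A B` is transported by the flow: `∂ₜw + (u·∇)w = 0`. -/
theorem rho_inv_AB_transported
    (ρ : ℝ × ℝ × ℝ → ℝ) (u B : ℝ × ℝ × ℝ → ℝ × ℝ)
    (A : ℝ × ℝ × ℝ → Matrix (Fin 2) (Fin 2) ℝ)
    (hρ : ContDiff ℝ (⊤ : ℕ∞) ρ) (hρpos : ∀ p, 0 < ρ p)
    (hu : ContDiff ℝ (⊤ : ℕ∞) u) (hB : ContDiff ℝ (⊤ : ℕ∞) B)
    (hA : ∀ i j, ContDiff ℝ (⊤ : ℕ∞) (fun p => A p i j))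
    (hcont : ∀ p, Dt ρ p + Dx1 (fun q => ρ q * (u q).1) p + Dx2 (fun q => ρ q * (u q).2) p = 0)
    (hind1 : ∀ p, Dt (fun q => (B q).1) p
      = Dx2 (fun q => (u q).1 * (B q).2 - (u q).2 * (B q).1) p)
    (hind2 : ∀ p, Dt (fun q => (B q).2) p
      = -(Dx1 (fun q => (u q).1 * (B q).2 - (u q).2 * (B q).1) p))
    (hdivB : ∀ p, Dx1 (fun q => (B q).1) p + Dx2 (fun q => (B q).2) p = 0)
    (hAeq : ∀ p (i j : Fin 2),
      Dt (fun q => A q i j) p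
        + (u p).1 * Dx1 (fun q => A q i j) p
        + (u p).2 * Dx2 (fun q => A q i j) p
        + (A p * gradU u p) i j = 0) :
    ∀ p (i : Fin 2),
      Dt (fun q => ((A q).mulVec ![(B q).1, (B q).2] i) / ρ q) p
        + (u p).1 * Dx1 (fun q => ((A q).mulVec ![(B q).1, (B q).2] i) / ρ q) p
        + (u p).2 * Dx2 (fun q => ((A q).mulVec ![(B q).1, (B q).2] i) / ρ q) p = 0 := by
  intro p i
  have hρd : DifferentiableAt ℝ ρ p := (hρ.differentiable (by simp)) p
  have hρ0 : ρ p ≠ 0 := (hρpos p).ne'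
  have hu1 : DifferentiableAt ℝ (fun q => (u q).1) p := ((hu.differentiable (by simp)) p).fst
  have hu2 : DifferentiableAt ℝ (fun q => (u q).2) p := ((hu.differentiable (by simp)) p).snd
  have hB1 : DifferentiableAt ℝ (fun q => (B q).1) p := ((hB.differentiable (by simp)) p).fst
  have hB2 : DifferentiableAt ℝ (fun q => (B q).2) p := ((hB.differentiable (by simp)) p).snd
  have hA0 : DifferentiableAt ℝ (fun q => A q i 0) p := ((hA i 0).differentiable (by simp)) p
  have hA1 : DifferentiableAt ℝ (fun q => A q i 1) p := ((hA i 1).differentiable (by simp)) p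
  have hfun : (fun q => ((A q).mulVec ![(B q).1, (B q).2] i) / ρ q)
      = fun q => (A q i 0 * (B q).1 + A q i 1 * (B q).2) / ρ q := by
    funext q
    simp [Matrix.mulVec, dotProduct, Fin.sum_univ_two]
  have hnum : DifferentiableAt ℝ (fun q => A q i 0 * (B q).1 + A q i 1 * (B q).2) p :=
    (hA0.mul hB1).add (hA1.mul hB2)
  have Hc := hcont p
  have Hi1 := hind1 p
  have Hi2 := hind2 p
  have Hd := hdivB p
  have HA0 := hAeq p i 0
  have HA1 := hAeq p i 1
  rw [hfun]
  simp only [Dt, Dx1, Dx2, gradU, Matrix.mul_apply, Fin.sum_univ_two, Matrix.of_apply,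
    Matrix.cons_val', Matrix.cons_val_zero, Matrix.cons_val_one, Matrix.head_cons,
    Matrix.empty_val', Matrix.cons_val_fin_one, Matrix.head_fin_const] at Hc Hi1 Hi2 Hd HA0 HA1 ⊢
  rw [fdv_mul hρd hu1, fdv_mul hρd hu2] at Hc
  rw [fdv_sub (hu1.fun_mul hB2) (hu2.fun_mul hB1), fdv_mul hu1 hB2, fdv_mul hu2 hB1] at Hi1
  rw [fdv_sub (hu1.fun_mul hB2) (hu2.fun_mul hB1), fdv_mul hu1 hB2, fdv_mul hu2 hB1] at Hi2
  simp only [fdv_div hnum hρd hρ0, fdv_add (hA0.fun_mul hB1) (hA1.fun_mul hB2),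
    fdv_mul hA0 hB1, fdv_mul hA1 hB2]
  have hr2 : (ρ p) ^ 2 ≠ 0 := pow_ne_zero 2 hρ0
  field_simp
  linear_combination (ρ p * (B p).1) * HA0 + (ρ p * (B p).2) * HA1
    + (ρ p * A p i 0) * Hi1 + (ρ p * A p i 1) * Hi2
    - (A p i 0 * (B p).1 + A p i 1 * (B p).2) * Hc
    + (ρ p * (A p i 0 * (u p).1 + A p i 1 * (u p).2)) * Hd
end

section
/- Let μ, λ ∈ ℝ. Let b : ℝ × ℝ² → ℝ and u = (u₁,u₂), H = (H₁,H₂) : ℝ × ℝ² → ℝ² be smooth and satisfy the linearized compressible MHD system: (a) ∂ₜb + div u = 0; (b) ∂ₜu − μΔu − (λ+μ)∇(div u) − ∂₁H + ∇(b + H₁) = 0; (c) ∂ₜH + h₀ div u = ∂₁u, where h₀ = (1,0)ᵀ. Then u satisfies the second-order equation ∂ₜₜu − μΔ(∂ₜu) − (λ+μ)∇(div ∂ₜu) − Q(D)u = 0, where Q(D)u := ∇(div u) + (0, Δu₂)ᵀ, i.e. (Q(D)u)₁ = ∂₁₁u₁ + ∂₁₂u₂ and (Q(D)u)₂ = ∂₁₂u₁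 + Δu₂ + ∂₂₂u₂. -/
abbrev E3 := ℝ × ℝ × ℝ

noncomputable def Dd (v : E3) (f : E3 → ℝ) : E3 → ℝ := fun p => fderiv ℝ f p v

lemma Dd_smooth {f : E3 → ℝ} (hf : ContDiff ℝ (⊤ : ℕ∞) f) (v : E3) : ContDiff ℝ (⊤ : ℕ∞) (Dd v f) :=
  (hf.fderiv_right (by simp)).clm_apply contDiff_const

lemma Dd_congr {f g : E3 → ℝ} (h : ∀ q, f q = g q) (v : E3) (p : E3) : Dd v f p = Dd v g p := by
  rw [show f = g from funext h]

lemma Dd_add {f g : E3 → ℝ} (hf : ContDiff ℝ (⊤ : ℕ∞) f) (hg : ContDiff ℝ (⊤ : ℕ∞) g) (v p : E3) :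
    Dd v (fun q => f q + g q) p = Dd v f p + Dd v g p := by
  unfold Dd
  rw [fderiv_fun_add ((hf.differentiable (by simp)) p) ((hg.differentiable (by simp)) p)]
  rfl

lemma Dd_comm {f : E3 → ℝ} (hf : ContDiff ℝ (⊤ : ℕ∞) f) (v w p : E3) :
    Dd v (Dd w f) p = Dd w (Dd v f) p := by
  have h1 : ContDiff ℝ (⊤ : ℕ∞) (fderiv ℝ f) := hf.fderiv_right (by simp)
  have h2 : DifferentiableAt ℝ (fderiv ℝ f) p := (h1.differentiable (by simp)) p
  have e : ∀ z : E3, fderiv ℝ (fun q => fderiv ℝ f q z) p =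
      ((fderiv ℝ (fderiv ℝ f) p).flip z) := by
    intro z
    have := fderiv_clm_apply h2 (differentiableAt_const z)
    simpa using this
  have hsymm := (hf.contDiffAt (x := p)).isSymmSndFDerivAt (by rw [minSmoothness_of_isRCLikeNormedField]; exact WithTop.coe_le_coe.mpr (le_top : (2:ℕ∞) ≤ ⊤))
  unfold Dd
  rw [e w, e v]
  exact hsymm v w

lemma Dd_negsub {f g : E3 → ℝ} (hf : ContDiff ℝ (⊤ : ℕ∞) f) (hg : ContDiff ℝ (⊤ : ℕ∞) g) (v p : E3) :
    Dd v (fun q => -f q - g q) p = -Dd v f p - Dd v g p := by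
  have Hf : HasFDerivAt f (fderiv ℝ f p) p := ((hf.differentiable (by simp)) p).hasFDerivAt
  have Hg : HasFDerivAt g (fderiv ℝ g p) p := ((hg.differentiable (by simp)) p).hasFDerivAt
  have key : HasFDerivAt (fun q => -f q - g q) (-fderiv ℝ f p - fderiv ℝ g p) p :=
    Hf.neg.sub Hg
  unfold Dd
  rw [key.fderiv]
  simp

lemma Dd_negn {f : E3 → ℝ} (hf : ContDiff ℝ (⊤ : ℕ∞) f) (v p : E3) :
    Dd v (fun q => -f q) p = -Dd v f p := by
  have Hf : HasFDerivAt f (fderiv ℝ f p) p := ((hf.differentiable (by simp)) p).hasFDerivAt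
  unfold Dd
  have key : HasFDerivAt (fun q => -f q) (-fderiv ℝ f p) p := Hf.neg
  rw [key.fderiv]
  simp

lemma Dd_comb1 {f g k m : E3 → ℝ} (hf : ContDiff ℝ (⊤ : ℕ∞) f) (hg : ContDiff ℝ (⊤ : ℕ∞) g)
    (hk : ContDiff ℝ (⊤ : ℕ∞) k) (hm : ContDiff ℝ (⊤ : ℕ∞) m) (a c : ℝ) (v p : E3) :
    Dd v (fun q => a * (f q + g q) + c * k q - m q) p
      = a * (Dd v f p + Dd v g p) + c * Dd v k p - Dd v m p := by
  have Hf : HasFDerivAt f (fderiv ℝ f p) p := ((hf.differentiable (by simp)) p).hasFDerivAt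
  have Hg : HasFDerivAt g (fderiv ℝ g p) p := ((hg.differentiable (by simp)) p).hasFDerivAt
  have Hk : HasFDerivAt k (fderiv ℝ k p) p := ((hk.differentiable (by simp)) p).hasFDerivAt
  have Hm : HasFDerivAt m (fderiv ℝ m p) p := ((hm.differentiable (by simp)) p).hasFDerivAt
  have key : HasFDerivAt (fun q => a * (f q + g q) + c * k q - m q)
      (a • (fderiv ℝ f p + fderiv ℝ g p) + c • fderiv ℝ k p - fderiv ℝ m p) p :=
    (((Hf.add Hg).const_mul a).add (Hk.const_mul c)).sub Hm
  unfold Dd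
  rw [key.fderiv]
  simp [mul_add]

lemma Dd_comb2 {f g k m n o : E3 → ℝ} (hf : ContDiff ℝ (⊤ : ℕ∞) f) (hg : ContDiff ℝ (⊤ : ℕ∞) g)
    (hk : ContDiff ℝ (⊤ : ℕ∞) k) (hm : ContDiff ℝ (⊤ : ℕ∞) m) (hn : ContDiff ℝ (⊤ : ℕ∞) n)
    (ho : ContDiff ℝ (⊤ : ℕ∞) o) (a c : ℝ) (v p : E3) :
    Dd v (fun q => a * (f q + g q) + c * k q + m q - n q - o q) p
      = a * (Dd v f p + Dd v g p) + c * Dd v k p + Dd v m p - Dd v n p - Dd v o p := by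
  have Hf : HasFDerivAt f (fderiv ℝ f p) p := ((hf.differentiable (by simp)) p).hasFDerivAt
  have Hg : HasFDerivAt g (fderiv ℝ g p) p := ((hg.differentiable (by simp)) p).hasFDerivAt
  have Hk : HasFDerivAt k (fderiv ℝ k p) p := ((hk.differentiable (by simp)) p).hasFDerivAt
  have Hm : HasFDerivAt m (fderiv ℝ m p) p := ((hm.differentiable (by simp)) p).hasFDerivAt
  have Hn : HasFDerivAt n (fderiv ℝ n p) p := ((hn.differentiable (by simp)) p).hasFDerivAt
  have Ho : HasFDerivAt o (fderiv ℝ o p) p := ((ho.differentiable (by simp)) p).hasFDerivAt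
  have key : HasFDerivAt (fun q => a * (f q + g q) + c * k q + m q - n q - o q)
      (a • (fderiv ℝ f p + fderiv ℝ g p) + c • fderiv ℝ k p + fderiv ℝ m p
        - fderiv ℝ n p - fderiv ℝ o p) p :=
    (((((Hf.add Hg).const_mul a).add (Hk.const_mul c)).add Hm).sub Hn).sub Ho
  unfold Dd
  rw [key.fderiv]
  simp [mul_add]

/-- The spatial Laplacian `Δ = ∂₁₁ + ∂₂₂`. -/
noncomputable def lap (f : ℝ × ℝ × ℝ → ℝ) : ℝ × ℝ × ℝ → ℝ :=
  fun p => Dx1 (Dx1 f) p + Dx2 (Dx2 f) p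

/-- From the linearized compressible MHD system
`∂ₜb + div u = 0`, `∂ₜu − μΔu − (λ+μ)∇div u − ∂₁H + ∇(b+H₁) = 0`,
`∂ₜH + h₀ div u = ∂₁u` one derives the degenerate second-order equation
`∂ₜₜu − μΔ∂ₜu − (λ+μ)∇div ∂ₜu − Q(D)u = 0` with
`Q(D)u = ∇div u + (0, Δu₂)ᵀ`. -/
theorem linearized_second_order_equation
    (μ lam : ℝ)
    (b : ℝ × ℝ × ℝ → ℝ) (u H : ℝ × ℝ × ℝ → ℝ × ℝ)
    (hb : ContDiff ℝ (⊤ : ℕ∞) b) (hu : ContDiff ℝ (⊤ : ℕ∞) u) (hH : ContDiff ℝ (⊤ : ℕ∞) H)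
    (ha : ∀ p, Dt b p + Dx1 (fun q => (u q).1) p + Dx2 (fun q => (u q).2) p = 0)
    (hb1 : ∀ p, Dt (fun q => (u q).1) p - μ * lap (fun q => (u q).1) p
      - (lam + μ) * Dx1 (fun q => Dx1 (fun r => (u r).1) q + Dx2 (fun r => (u r).2) q) p
      - Dx1 (fun q => (H q).1) p
      + Dx1 (fun q => b q + (H q).1) p = 0)
    (hb2 : ∀ p, Dt (fun q => (u q).2) p - μ * lap (fun q => (u q).2) p
      - (lam + μ) * Dx2 (fun q => Dx1 (fun r => (u r).1) q + Dx2 (fun r => (u r).2) q) p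
      - Dx1 (fun q => (H q).2) p
      + Dx2 (fun q => b q + (H q).1) p = 0)
    (hc1 : ∀ p, Dt (fun q => (H q).1) p
      + (Dx1 (fun q => (u q).1) p + Dx2 (fun q => (u q).2) p)
      = Dx1 (fun q => (u q).1) p)
    (hc2 : ∀ p, Dt (fun q => (H q).2) p = Dx1 (fun q => (u q).2) p) :
    ∀ p : ℝ × ℝ × ℝ,
      (Dt (Dt (fun q => (u q).1)) p
        - μ * lap (Dt (fun q => (u q).1)) p
        - (lam + μ) * Dx1 (fun q => Dx1 (Dt (fun r => (u r).1)) q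
            + Dx2 (Dt (fun r => (u r).2)) q) p
        - (Dx1 (Dx1 (fun q => (u q).1)) p + Dx1 (Dx2 (fun q => (u q).2)) p) = 0)
      ∧ (Dt (Dt (fun q => (u q).2)) p
        - μ * lap (Dt (fun q => (u q).2)) p
        - (lam + μ) * Dx2 (fun q => Dx1 (Dt (fun r => (u r).1)) q
            + Dx2 (Dt (fun r => (u r).2)) q) p
        - (Dx1 (Dx2 (fun q => (u q).1)) p + lap (fun q => (u q).2) p
            + Dx2 (Dx2 (fun q => (u q).2)) p) = 0) := by
  have hu1 : ContDiff ℝ (⊤ : ℕ∞) (fun q => (u q).1) := hu.fst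
  have hu2 : ContDiff ℝ (⊤ : ℕ∞) (fun q => (u q).2) := hu.snd
  have hH1 : ContDiff ℝ (⊤ : ℕ∞) (fun q => (H q).1) := hH.fst
  have hH2 : ContDiff ℝ (⊤ : ℕ∞) (fun q => (H q).2) := hH.snd
  simp only [lap, show Dt = Dd (1,0,0) from rfl, show Dx1 = Dd (0,1,0) from rfl,
    show Dx2 = Dd (0,0,1) from rfl] at ha hb1 hb2 hc1 hc2 ⊢
  -- smoothness of basic derivatives
  have sdiv : ContDiff ℝ (⊤ : ℕ∞) (fun q => Dd (0,1,0) (fun r => (u r).1) q + Dd (0,0,1) (fun r => (u r).2) q) := (Dd_smooth hu1 (0,1,0)).add (Dd_smooth hu2 (0,0,1))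
  -- time derivative of b
  have hb0 : ∀ q, Dd (1,0,0) b q = -Dd (0,1,0) (fun q => (u q).1) q - Dd (0,0,1) (fun q => (u q).2) q := by
    intro q; linarith [ha q]
  -- time derivative of H₁
  have hH1t : ∀ q, Dd (1,0,0) (fun q => (H q).1) q = -Dd (0,0,1) (fun q => (u q).2) q := by
    intro q; linarith [hc1 q]
  -- reduced momentum equations
  have m1 : ∀ q, Dd (1,0,0) (fun q => (u q).1) q
      = μ * (Dd (0,1,0) (Dd (0,1,0) (fun q => (u q).1)) q + Dd (0,0,1) (Dd (0,0,1) (fun q => (u q).1)) q)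
        + (lam + μ) * Dd (0,1,0) (fun q => Dd (0,1,0) (fun r => (u r).1) q + Dd (0,0,1) (fun r => (u r).2) q) q - Dd (0,1,0) b q := by
    intro q
    have hadd : Dd (0,1,0) (fun r => b r + (H r).1) q
        = Dd (0,1,0) b q + Dd (0,1,0) (fun q => (H q).1) q := Dd_add hb hH1 _ _
    linarith [hb1 q]
  have m2 : ∀ q, Dd (1,0,0) (fun q => (u q).2) q
      = μ * (Dd (0,1,0) (Dd (0,1,0) (fun q => (u q).2)) q + Dd (0,0,1) (Dd (0,0,1) (fun q => (u q).2)) q)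
        + (lam + μ) * Dd (0,0,1) (fun q => Dd (0,1,0) (fun r => (u r).1) q + Dd (0,0,1) (fun r => (u r).2) q) q + Dd (0,1,0) (fun q => (H q).2) q - Dd (0,0,1) b q
        - Dd (0,0,1) (fun q => (H q).1) q := by
    intro q
    have hadd : Dd (0,0,1) (fun r => b r + (H r).1) q
        = Dd (0,0,1) b q + Dd (0,0,1) (fun q => (H q).1) q := Dd_add hb hH1 _ _
    linarith [hb2 q]
  -- time derivative of div u commuted
  have hdivt : ∀ q, Dd (1,0,0) (fun q => Dd (0,1,0) (fun r => (u r).1) q + Dd (0,0,1) (fun r => (u r).2) q) q = (fun q => Dd (0,1,0) (Dd (1,0,0) (fun r => (u r).1)) q + Dd (0,0,1) (Dd (1,0,0) (fun r => (u r).2)) q) q := by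
    intro q
    have h1 : Dd (1,0,0) (fun q => Dd (0,1,0) (fun r => (u r).1) q + Dd (0,0,1) (fun r => (u r).2) q) q
        = Dd (1,0,0) (Dd (0,1,0) (fun q => (u q).1)) q + Dd (1,0,0) (Dd (0,0,1) (fun q => (u q).2)) q :=
      Dd_add (Dd_smooth hu1 _) (Dd_smooth hu2 _) _ _
    rw [h1, Dd_comm hu1 (1,0,0) (0,1,0) q, Dd_comm hu2 (1,0,0) (0,0,1) q]
  intro p
  constructor
  · -- first component
    have key : Dd (1,0,0) (Dd (1,0,0) (fun q => (u q).1)) p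
        = Dd (1,0,0) (fun q => μ * (Dd (0,1,0) (Dd (0,1,0) (fun q => (u q).1)) q + Dd (0,0,1) (Dd (0,0,1) (fun q => (u q).1)) q)
            + (lam + μ) * Dd (0,1,0) (fun q => Dd (0,1,0) (fun r => (u r).1) q + Dd (0,0,1) (fun r => (u r).2) q) q - Dd (0,1,0) b q) p := Dd_congr m1 _ _
    rw [Dd_comb1 (Dd_smooth (Dd_smooth hu1 _) _) (Dd_smooth (Dd_smooth hu1 _) _)
      (Dd_smooth sdiv _) (Dd_smooth hb _) μ (lam + μ) (1,0,0) p] at key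
    -- commute the time derivative inward
    have c11 : Dd (1,0,0) (Dd (0,1,0) (Dd (0,1,0) (fun q => (u q).1))) p
        = Dd (0,1,0) (Dd (0,1,0) (Dd (1,0,0) (fun q => (u q).1))) p :=
      (Dd_comm (Dd_smooth hu1 _) _ _ _).trans (Dd_congr (Dd_comm hu1 (1,0,0) (0,1,0)) _ _)
    have c12 : Dd (1,0,0) (Dd (0,0,1) (Dd (0,0,1) (fun q => (u q).1))) p
        = Dd (0,0,1) (Dd (0,0,1) (Dd (1,0,0) (fun q => (u q).1))) p :=
      (Dd_comm (Dd_smooth hu1 _) _ _ _).trans (Dd_congr (Dd_comm hu1 (1,0,0) (0,0,1)) _ _)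
    have cdiv : Dd (1,0,0) (Dd (0,1,0) (fun q => Dd (0,1,0) (fun r => (u r).1) q + Dd (0,0,1) (fun r => (u r).2) q)) p = Dd (0,1,0) (fun q => Dd (0,1,0) (Dd (1,0,0) (fun r => (u r).1)) q + Dd (0,0,1) (Dd (1,0,0) (fun r => (u r).2)) q) p :=
      (Dd_comm sdiv _ _ _).trans (Dd_congr hdivt _ _)
    have cb : Dd (1,0,0) (Dd (0,1,0) b) p
        = -Dd (0,1,0) (Dd (0,1,0) (fun q => (u q).1)) p - Dd (0,1,0) (Dd (0,0,1) (fun q => (u q).2)) p := by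
      rw [Dd_comm hb (1,0,0) (0,1,0) p, Dd_congr hb0 (0,1,0) p]
      exact Dd_negsub (Dd_smooth hu1 _) (Dd_smooth hu2 _) _ _
    rw [c11, c12, cdiv, cb] at key
    linarith [key]
  · -- second component
    have key : Dd (1,0,0) (Dd (1,0,0) (fun q => (u q).2)) p
        = Dd (1,0,0) (fun q => μ * (Dd (0,1,0) (Dd (0,1,0) (fun q => (u q).2)) q + Dd (0,0,1) (Dd (0,0,1) (fun q => (u q).2)) q)
            + (lam + μ) * Dd (0,0,1) (fun q => Dd (0,1,0) (fun r => (u r).1) q + Dd (0,0,1) (fun r => (u r).2) q) q + Dd (0,1,0) (fun q => (H q).2) q - Dd (0,0,1) b q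
            - Dd (0,0,1) (fun q => (H q).1) q) p := Dd_congr m2 _ _
    rw [Dd_comb2 (Dd_smooth (Dd_smooth hu2 _) _) (Dd_smooth (Dd_smooth hu2 _) _)
      (Dd_smooth sdiv _) (Dd_smooth hH2 _) (Dd_smooth hb _) (Dd_smooth hH1 _)
      μ (lam + μ) (1,0,0) p] at key
    have c21 : Dd (1,0,0) (Dd (0,1,0) (Dd (0,1,0) (fun q => (u q).2))) p
        = Dd (0,1,0) (Dd (0,1,0) (Dd (1,0,0) (fun q => (u q).2))) p :=
      (Dd_comm (Dd_smooth hu2 _) _ _ _).trans (Dd_congr (Dd_comm hu2 (1,0,0) (0,1,0)) _ _)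
    have c22 : Dd (1,0,0) (Dd (0,0,1) (Dd (0,0,1) (fun q => (u q).2))) p
        = Dd (0,0,1) (Dd (0,0,1) (Dd (1,0,0) (fun q => (u q).2))) p :=
      (Dd_comm (Dd_smooth hu2 _) _ _ _).trans (Dd_congr (Dd_comm hu2 (1,0,0) (0,0,1)) _ _)
    have cdiv : Dd (1,0,0) (Dd (0,0,1) (fun q => Dd (0,1,0) (fun r => (u r).1) q + Dd (0,0,1) (fun r => (u r).2) q)) p = Dd (0,0,1) (fun q => Dd (0,1,0) (Dd (1,0,0) (fun r => (u r).1)) q + Dd (0,0,1) (Dd (1,0,0) (fun r => (u r).2)) q) p :=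
      (Dd_comm sdiv _ _ _).trans (Dd_congr hdivt _ _)
    have cH2 : Dd (1,0,0) (Dd (0,1,0) (fun q => (H q).2)) p = Dd (0,1,0) (Dd (0,1,0) (fun q => (u q).2)) p :=
      (Dd_comm hH2 _ _ _).trans (Dd_congr hc2 _ _)
    have cb : Dd (1,0,0) (Dd (0,0,1) b) p
        = -Dd (0,0,1) (Dd (0,1,0) (fun q => (u q).1)) p - Dd (0,0,1) (Dd (0,0,1) (fun q => (u q).2)) p := by
      rw [Dd_comm hb (1,0,0) (0,0,1) p, Dd_congr hb0 (0,0,1) p]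
      exact Dd_negsub (Dd_smooth hu1 _) (Dd_smooth hu2 _) _ _
    have cH1 : Dd (1,0,0) (Dd (0,0,1) (fun q => (H q).1)) p = -Dd (0,0,1) (Dd (0,0,1) (fun q => (u q).2)) p := by
      rw [Dd_comm hH1 (1,0,0) (0,0,1) p, Dd_congr hH1t (0,0,1) p]
      exact Dd_negn (Dd_smooth hu2 _) _ _
    have cc : Dd (0,0,1) (Dd (0,1,0) (fun q => (u q).1)) p = Dd (0,1,0) (Dd (0,0,1) (fun q => (u q).1)) p :=
      Dd_comm hu1 _ _ _
    rw [c21, c22, cdiv, cH2, cb, cH1] at key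
    linarith [key, cc]
end

section
/- For ξ = (ξ₁,ξ₂) ∈ ℝ² with ξ₁ ≠ 0 and ξ₂ ≠ 0, set λ₋(ξ) = |ξ|²(1 − √(1 − ξ₁²/|ξ|²)), λ₊(ξ) = |ξ|²(1 + √(1 − ξ₁²/|ξ|²)), a(ξ) = (ξ₁² − λ₋(ξ))/ξ₁, N(ξ) = √(ξ₂² + a(ξ)²), and P(ξ) = N(ξ)⁻¹·[[−ξ₂, a(ξ)],[a(ξ), ξ₂]]. Let W(ξ) ∈ ℝ² be the vector W(ξ) = P(ξ)·diag(λ₋(ξ)⁻¹, λ₊(ξ)⁻¹)·P(ξ) applied to the column vector ξ. Then there exists a constant C > 0, independent of ξ, such that |W(ξ)₁| ≤ C(λ₋(ξ)^{-1/2} + λ₊(ξ)^{-1/2}) and |W(ξ)₂| ≤ C|ξ|⁻¹ for all such ξ. -/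
open Matrix

/-- The slow magneto-acoustic wave speed `λ₋(ξ) = |ξ|²(1 − √(1 − ξ₁²/|ξ|²))`. -/
noncomputable def lamMinus (ξ : ℝ × ℝ) : ℝ :=
  (ξ.1 ^ 2 + ξ.2 ^ 2) * (1 - Real.sqrt (1 - ξ.1 ^ 2 / (ξ.1 ^ 2 + ξ.2 ^ 2)))

/-- The fast magneto-acoustic wave speed `λ₊(ξ) = |ξ|²(1 + √(1 − ξ₁²/|ξ|²))`. -/
noncomputable def lamPlus (ξ : ℝ × ℝ) : ℝ :=
  (ξ.1 ^ 2 + ξ.2 ^ 2) * (1 + Real.sqrt (1 - ξ.1 ^ 2 / (ξ.1 ^ 2 + ξ.2 ^ 2)))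

/-- `a(ξ) = (ξ₁² − λ₋(ξ))/ξ₁`. -/
noncomputable def aF (ξ : ℝ × ℝ) : ℝ := (ξ.1 ^ 2 - lamMinus ξ) / ξ.1

/-- The normalization factor `N(ξ) = √(ξ₂² + a(ξ)²)`. -/
noncomputable def nF (ξ : ℝ × ℝ) : ℝ := Real.sqrt (ξ.2 ^ 2 + aF ξ ^ 2)

/-- The orthonormal diagonalizer `P(ξ) = N(ξ)⁻¹·[[−ξ₂, a(ξ)],[a(ξ), ξ₂]]`. -/
noncomputable def Pmat (ξ : ℝ × ℝ) : Matrix (Fin 2) (Fin 2) ℝ :=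
  (nF ξ)⁻¹ • !![-ξ.2, aF ξ; aF ξ, ξ.2]

/-- The symbol `W(ξ) = P(ξ)·diag(λ₋⁻¹, λ₊⁻¹)·P(ξ)` applied to the vector `ξ`. -/
noncomputable def Wvec (ξ : ℝ × ℝ) : Fin 2 → ℝ :=
  (Pmat ξ * Matrix.diagonal ![(lamMinus ξ)⁻¹, (lamPlus ξ)⁻¹] * Pmat ξ).mulVec
    ![ξ.1, ξ.2]

/-! Since `P(ξ)` is a symmetric orthogonal matrix with `P M P = diag(λ₋, λ₊)` for
`M(ξ) = [[ξ₁², ξ₁ξ₂], [ξ₁ξ₂, |ξ|² + ξ₂²]]`, the symbol is `W(ξ) = M(ξ)⁻¹ ξ = (ξ₁⁻¹, 0)`.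
Both bounds then hold with `C = 1`, the first because `λ₋(ξ) ≤ ξ₁²`: the quadratic
`x² − 2|ξ|² x + ξ₁²|ξ|²`, whose roots are `λ₋ ≤ λ₊`, is `−ξ₁²ξ₂² ≤ 0` at `x = ξ₁²`. -/

lemma Matrix.smul_mul_mul_smul_mul_eq_one {n R : Type*} [Fintype n] [DecidableEq n] [Field R]
    {Q M D E : Matrix n n R} {c : R} (hc : c ≠ 0) (hQQ : Q * Q = c ^ 2 • 1)
    (hQM : Q * M = D * Q) (hED : E * D = 1) :
    c⁻¹ • Q * E * (c⁻¹ • Q) * M = 1 := by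
  calc c⁻¹ • Q * E * (c⁻¹ • Q) * M = (c⁻¹ ^ 2) • (Q * E * (Q * M)) := by
        simp only [Matrix.smul_mul, Matrix.mul_smul, smul_smul, Matrix.mul_assoc, sq]
    _ = (c⁻¹ ^ 2) • (Q * Q) := by
        rw [hQM, ← Matrix.mul_assoc (Q * E), Matrix.mul_assoc Q E, hED, Matrix.mul_one]
    _ = 1 := by rw [hQQ, smul_smul, ← mul_pow, inv_mul_cancel₀ hc, one_pow, one_smul]

noncomputable def Mmat (ξ : ℝ × ℝ) : Matrix (Fin 2) (Fin 2) ℝ :=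
  !![ξ.1 ^ 2, ξ.1 * ξ.2; ξ.1 * ξ.2, ξ.1 ^ 2 + ξ.2 ^ 2 + ξ.2 ^ 2]

noncomputable def Qmat (ξ : ℝ × ℝ) : Matrix (Fin 2) (Fin 2) ℝ :=
  !![-ξ.2, aF ξ; aF ξ, ξ.2]

section

variable (ξ : ℝ × ℝ)

lemma one_sub_sq_fst_div_nonneg : 0 ≤ 1 - ξ.1 ^ 2 / (ξ.1 ^ 2 + ξ.2 ^ 2) :=
  sub_nonneg.2 (div_le_one_of_le₀ (by nlinarith [sq_nonneg ξ.2]) (by positivity))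

lemma lamMinus_add_lamPlus : lamMinus ξ + lamPlus ξ = 2 * (ξ.1 ^ 2 + ξ.2 ^ 2) := by
  rw [lamMinus, lamPlus]; ring

lemma lamMinus_mul_lamPlus : lamMinus ξ * lamPlus ξ = ξ.1 ^ 2 * (ξ.1 ^ 2 + ξ.2 ^ 2) := by
  rcases eq_or_ne (ξ.1 ^ 2 + ξ.2 ^ 2) 0 with hs | hs
  · simp [lamMinus, lamPlus, hs]
  have hr : Real.sqrt (1 - ξ.1 ^ 2 / (ξ.1 ^ 2 + ξ.2 ^ 2)) ^ 2 * (ξ.1 ^ 2 + ξ.2 ^ 2) = ξ.2 ^ 2 := by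
    rw [Real.sq_sqrt (one_sub_sq_fst_div_nonneg ξ)]
    field_simp
    ring
  rw [lamMinus, lamPlus]
  linear_combination (-(ξ.1 ^ 2 + ξ.2 ^ 2)) * hr

lemma lamMinus_le_lamPlus : lamMinus ξ ≤ lamPlus ξ := by
  rw [lamMinus, lamPlus]
  gcongr
  linarith [Real.sqrt_nonneg (1 - ξ.1 ^ 2 / (ξ.1 ^ 2 + ξ.2 ^ 2))]

lemma lamMinus_nonneg : 0 ≤ lamMinus ξ :=
  mul_nonneg (by positivity) (sub_nonneg.2 (Real.sqrt_le_one.2 (sub_le_self _ (by positivity))))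

lemma sq_fst_sub_lamMinus_mul_sq_fst_sub_lamPlus :
    (ξ.1 ^ 2 - lamMinus ξ) * (ξ.1 ^ 2 - lamPlus ξ) = -(ξ.1 ^ 2 * ξ.2 ^ 2) := by
  linear_combination (-ξ.1 ^ 2) * lamMinus_add_lamPlus ξ + lamMinus_mul_lamPlus ξ

lemma lamMinus_le_sq_fst : lamMinus ξ ≤ ξ.1 ^ 2 := by
  nlinarith [sq_fst_sub_lamMinus_mul_sq_fst_sub_lamPlus ξ, lamMinus_le_lamPlus ξ,
    mul_nonneg (sq_nonneg ξ.1) (sq_nonneg ξ.2)]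

variable {ξ}

lemma lamMinus_pos (h₁ : ξ.1 ≠ 0) : 0 < lamMinus ξ := by
  refine (lamMinus_nonneg ξ).lt_of_ne' fun h ↦ ?_
  have := lamMinus_mul_lamPlus ξ
  rw [h, zero_mul] at this
  have : 0 < ξ.1 ^ 2 * (ξ.1 ^ 2 + ξ.2 ^ 2) := by positivity
  linarith

lemma lamPlus_pos (h₁ : ξ.1 ≠ 0) : 0 < lamPlus ξ :=
  (lamMinus_pos h₁).trans_le (lamMinus_le_lamPlus ξ)

lemma fst_mul_aF (h₁ : ξ.1 ≠ 0) : ξ.1 * aF ξ = ξ.1 ^ 2 - lamMinus ξ := by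
  rw [aF, mul_div_cancel₀ _ h₁]

lemma Mmat_mul_Qmat (h₁ : ξ.1 ≠ 0) :
    Mmat ξ * Qmat ξ = Qmat ξ * diagonal ![lamMinus ξ, lamPlus ξ] := by
  have ha := fst_mul_aF h₁
  have hsum := lamMinus_add_lamPlus ξ
  have hprod := lamMinus_mul_lamPlus ξ
  rw [Mmat, Qmat, diagonal_fin_two, mul_fin_two, mul_fin_two]
  ext i j
  fin_cases i <;> fin_cases j <;>
    simp only [Fin.zero_eta, Fin.mk_one, Fin.isValue, of_apply, cons_val', cons_val_zero,
      cons_val_one, cons_val_fin_one]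
  · linear_combination ξ.2 * ha
  · refine mul_left_cancel₀ h₁ ?_
    linear_combination (ξ.1 ^ 2 - lamPlus ξ) * ha - ξ.1 ^ 2 * hsum + hprod
  · refine mul_left_cancel₀ h₁ ?_
    linear_combination (ξ.1 ^ 2 + 2 * ξ.2 ^ 2 - lamMinus ξ) * ha + lamMinus ξ * hsum - hprod
  · linear_combination ξ.2 * ha - ξ.2 * hsum

lemma Qmat_mul_Mmat (h₁ : ξ.1 ≠ 0) :
    Qmat ξ * Mmat ξ = diagonal ![lamMinus ξ, lamPlus ξ] * Qmat ξ := by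
  have hQ : (Qmat ξ)ᵀ = Qmat ξ := by
    ext i j; fin_cases i <;> fin_cases j <;> rfl
  have hM : (Mmat ξ)ᵀ = Mmat ξ := by
    ext i j; fin_cases i <;> fin_cases j <;> simp [Mmat]
  simpa [transpose_mul, hQ, hM] using congrArg transpose (Mmat_mul_Qmat h₁)

lemma Qmat_mul_Qmat : Qmat ξ * Qmat ξ = nF ξ ^ 2 • 1 := by
  rw [nF, Real.sq_sqrt (by positivity), Qmat, mul_fin_two, one_fin_two]
  ext i j
  fin_cases i <;> fin_cases j <;>
    simp only [Fin.zero_eta, Fin.mk_one, Fin.isValue, of_apply, cons_val', cons_val_zero,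
      cons_val_one, cons_val_fin_one, Matrix.smul_apply, smul_eq_mul] <;> ring

lemma nF_ne_zero (h₂ : ξ.2 ≠ 0) : nF ξ ≠ 0 :=
  (Real.sqrt_pos.2 (by positivity)).ne'

lemma Pmat_eq : Pmat ξ = (nF ξ)⁻¹ • Qmat ξ := rfl

lemma Mmat_mulVec (h₁ : ξ.1 ≠ 0) : Mmat ξ *ᵥ ![ξ.1⁻¹, 0] = ![ξ.1, ξ.2] := by
  rw [Mmat, cons_mulVec, cons_mulVec, empty_mulVec, vec2_dotProduct', vec2_dotProduct',
    mul_zero, mul_zero, add_zero, add_zero]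
  refine vec2_eq ?_ ?_ <;> field_simp

lemma Wvec_eq (h₁ : ξ.1 ≠ 0) (h₂ : ξ.2 ≠ 0) : Wvec ξ = ![ξ.1⁻¹, 0] := by
  have hED : diagonal ![(lamMinus ξ)⁻¹, (lamPlus ξ)⁻¹] * diagonal ![lamMinus ξ, lamPlus ξ] = 1 := by
    rw [diagonal_mul_diagonal, ← diagonal_one]
    congr 1
    ext i
    fin_cases i <;> simp [(lamMinus_pos h₁).ne', (lamPlus_pos h₁).ne']
  rw [Wvec, ← Mmat_mulVec h₁, mulVec_mulVec, Pmat_eq,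
    smul_mul_mul_smul_mul_eq_one (nF_ne_zero h₂) Qmat_mul_Qmat (Qmat_mul_Mmat h₁) hED, one_mulVec]

end

/-- The multiplier estimates (le21a)–(le21b):
`|W(ξ)₁| ≤ C(λ₋(ξ)^{-1/2} + λ₊(ξ)^{-1/2})` and `|W(ξ)₂| ≤ C|ξ|⁻¹`
with a constant `C` independent of `ξ`. -/
theorem Wvec_bounds :
    ∃ C : ℝ, 0 < C ∧ ∀ ξ : ℝ × ℝ, ξ.1 ≠ 0 → ξ.2 ≠ 0 →
      |Wvec ξ 0| ≤ C * ((Real.sqrt (lamMinus ξ))⁻¹ + (Real.sqrt (lamPlus ξ))⁻¹)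
      ∧ |Wvec ξ 1| ≤ C * (Real.sqrt (ξ.1 ^ 2 + ξ.2 ^ 2))⁻¹ := by
  refine ⟨1, one_pos, fun ξ h₁ h₂ ↦ ?_⟩
  rw [Wvec_eq h₁ h₂, one_mul, one_mul]
  refine ⟨?_, by simp only [cons_val_one, cons_val_zero, abs_zero]; positivity⟩
  have hsqrt : Real.sqrt (lamMinus ξ) ≤ |ξ.1| :=
    Real.sqrt_le_sqrt (lamMinus_le_sq_fst ξ) |>.trans_eq (Real.sqrt_sq_eq_abs ξ.1)
  calc |![ξ.1⁻¹, 0] 0| = |ξ.1|⁻¹ := by simp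
    _ ≤ (Real.sqrt (lamMinus ξ))⁻¹ := inv_anti₀ (Real.sqrt_pos.2 (lamMinus_pos h₁)) hsqrt
    _ ≤ _ := le_add_of_nonneg_right (by positivity)
end

section
/- Let b, K : ℝ × ℝ² → ℝ and u = (u₁,u₂), H = (H₁,H₂), M = (M₁,M₂) : ℝ × ℝ² → ℝ² be smooth and satisfy ∂ₜb + (u·∇)b + div u = K and ∂ₜH + (u·∇)H + h₀ div u − ∂₁u = M, where h₀ = (1,0)ᵀ. Then the vector field 𝔥 := ∇(b + H₁) − ∂₁H satisfies ∂ₜ𝔥 + Q(D)u = ∇(K + M₁) − ∂₁M − ∇((u·∇)(b+H₁)) + ∂₁((u·∇)H), where Q(D)u := ∇(div u) + (0, Δu₂)ᵀ, i.e. (Q(D)u)₁ = ∂₁₁u₁ + ∂₁₂u₂ and (Q(D)u)₂ = ∂₁₂u₁ + Δu₂ + ∂₂₂u₂. -/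
/-- The convection operator `(u·∇)φ = u₁∂₁φ + u₂∂₂φ` on scalar functions. -/
noncomputable def conv (u : ℝ × ℝ × ℝ → ℝ × ℝ) (f : ℝ × ℝ × ℝ → ℝ) : ℝ × ℝ × ℝ → ℝ :=
  fun p => (u p).1 * Dx1 f p + (u p).2 * Dx2 f p

private lemma smoothD {f : ℝ × ℝ × ℝ → ℝ} (hf : ContDiff ℝ (⊤ : ℕ∞) f) (v : ℝ × ℝ × ℝ) :
    ContDiff ℝ (⊤ : ℕ∞) (fun p => fderiv ℝ f p v) :=
  (hf.fderiv_right (by simp)).clm_apply contDiff_const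

private lemma D_add {f g : ℝ × ℝ × ℝ → ℝ} (hf : ContDiff ℝ (⊤ : ℕ∞) f) (hg : ContDiff ℝ (⊤ : ℕ∞) g)
    (v p : ℝ × ℝ × ℝ) :
    fderiv ℝ (fun q => f q + g q) p v = fderiv ℝ f p v + fderiv ℝ g p v := by
  rw [fderiv_fun_add (hf.differentiable (by simp) p) (hg.differentiable (by simp) p)]
  simp

private lemma D_sub {f g : ℝ × ℝ × ℝ → ℝ} (hf : ContDiff ℝ (⊤ : ℕ∞) f) (hg : ContDiff ℝ (⊤ : ℕ∞) g)
    (v p : ℝ × ℝ × ℝ) :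
    fderiv ℝ (fun q => f q - g q) p v = fderiv ℝ f p v - fderiv ℝ g p v := by
  rw [fderiv_fun_sub (hf.differentiable (by simp) p) (hg.differentiable (by simp) p)]
  simp

private lemma D_swap {f : ℝ × ℝ × ℝ → ℝ} (hf : ContDiff ℝ (⊤ : ℕ∞) f) (v w p : ℝ × ℝ × ℝ) :
    fderiv ℝ (fun q => fderiv ℝ f q v) p w = fderiv ℝ (fun q => fderiv ℝ f q w) p v := by
  have hd : DifferentiableAt ℝ (fderiv ℝ f) p :=
    ((hf.fderiv_right (m := 1) (WithTop.coe_le_coe.mpr le_top)).differentiable one_ne_zero) p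
  have h1 : fderiv ℝ (fun q => fderiv ℝ f q v) p w = fderiv ℝ (fderiv ℝ f) p w v := by
    rw [fderiv_clm_apply hd (differentiableAt_const v)]
    simp
  have h2 : fderiv ℝ (fun q => fderiv ℝ f q w) p v = fderiv ℝ (fderiv ℝ f) p v w := by
    rw [fderiv_clm_apply hd (differentiableAt_const w)]
    simp
  have hsym := (hf.contDiffAt (x := p)).isSymmSndFDerivAt (by norm_num; exact WithTop.coe_le_coe.mpr le_top)
  rw [h1, h2, hsym w v]

/-- Equation (81a) of the paper: from
`∂ₜb + (u·∇)b + div u = K` and `∂ₜH + (u·∇)H + h₀ div u − ∂₁u = M` (with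
`h₀ = (1,0)ᵀ`), the effective flux `𝔥 = ∇(b+H₁) − ∂₁H` satisfies
`∂ₜ𝔥 + Q(D)u = ∇(K+M₁) − ∂₁M − ∇((u·∇)(b+H₁)) + ∂₁((u·∇)H)`. -/
theorem effective_flux_equation
    (b K : ℝ × ℝ × ℝ → ℝ) (u H M : ℝ × ℝ × ℝ → ℝ × ℝ)
    (hbs : ContDiff ℝ (⊤ : ℕ∞) b) (hKs : ContDiff ℝ (⊤ : ℕ∞) K)
    (hus : ContDiff ℝ (⊤ : ℕ∞) u) (hHs : ContDiff ℝ (⊤ : ℕ∞) H) (hMs : ContDiff ℝ (⊤ : ℕ∞) M)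
    (hbeq : ∀ p, Dt b p + conv u b p
      + (Dx1 (fun q => (u q).1) p + Dx2 (fun q => (u q).2) p) = K p)
    (hH1eq : ∀ p, Dt (fun q => (H q).1) p + conv u (fun q => (H q).1) p
      + (Dx1 (fun q => (u q).1) p + Dx2 (fun q => (u q).2) p)
      - Dx1 (fun q => (u q).1) p = (M p).1)
    (hH2eq : ∀ p, Dt (fun q => (H q).2) p + conv u (fun q => (H q).2) p
      - Dx1 (fun q => (u q).2) p = (M p).2) :
    ∀ p : ℝ × ℝ × ℝ,
      (Dt (fun q => Dx1 (fun r => b r + (H r).1) q - Dx1 (fun r => (H r).1) q) p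
          + (Dx1 (Dx1 (fun q => (u q).1)) p + Dx1 (Dx2 (fun q => (u q).2)) p)
        = Dx1 (fun q => K q + (M q).1) p - Dx1 (fun q => (M q).1) p
          - Dx1 (conv u (fun r => b r + (H r).1)) p
          + Dx1 (conv u (fun r => (H r).1)) p)
      ∧ (Dt (fun q => Dx2 (fun r => b r + (H r).1) q - Dx1 (fun r => (H r).2) q) p
          + (Dx1 (Dx2 (fun q => (u q).1)) p
            + (Dx1 (Dx1 (fun q => (u q).2)) p + Dx2 (Dx2 (fun q => (u q).2)) p)
            + Dx2 (Dx2 (fun q => (u q).2)) p)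
        = Dx2 (fun q => K q + (M q).1) p - Dx1 (fun q => (M q).2) p
          - Dx2 (conv u (fun r => b r + (H r).1)) p
          + Dx1 (conv u (fun r => (H r).2)) p) := by
  have hu1 : ContDiff ℝ (⊤ : ℕ∞) (fun q => (u q).1) := contDiff_fst.comp hus
  have hu2 : ContDiff ℝ (⊤ : ℕ∞) (fun q => (u q).2) := contDiff_snd.comp hus
  have hH1 : ContDiff ℝ (⊤ : ℕ∞) (fun q => (H q).1) := contDiff_fst.comp hHs
  have hH2 : ContDiff ℝ (⊤ : ℕ∞) (fun q => (H q).2) := contDiff_snd.comp hHs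
  have hM1 : ContDiff ℝ (⊤ : ℕ∞) (fun q => (M q).1) := contDiff_fst.comp hMs
  have hM2 : ContDiff ℝ (⊤ : ℕ∞) (fun q => (M q).2) := contDiff_snd.comp hMs
  have hconv : ∀ f : ℝ × ℝ × ℝ → ℝ, ContDiff ℝ (⊤ : ℕ∞) f → ContDiff ℝ (⊤ : ℕ∞) (conv u f) := fun f hf =>
    (hu1.mul (smoothD hf _)).add (hu2.mul (smoothD hf _))
  have hF : ContDiff ℝ (⊤ : ℕ∞) (fun r => b r + (H r).1) := hbs.add hH1
  have hS : ContDiff ℝ (⊤ : ℕ∞) (fun q => Dx1 (fun r => (u r).1) q + Dx2 (fun r => (u r).2) q) :=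
    (smoothD hu1 _).add (smoothD hu2 _)
  -- conv additivity
  have conv_add : conv u (fun r => b r + (H r).1)
      = fun q => conv u b q + conv u (fun r => (H r).1) q := by
    funext q
    simp only [conv, Dx1, Dx2]
    rw [D_add hbs hH1, D_add hbs hH1]
    ring
  intro p
  constructor
  · -- first component
    have e1 : (fun q => Dx1 (fun r => b r + (H r).1) q - Dx1 (fun r => (H r).1) q) = Dx1 b := by
      funext q
      have h := D_add hbs hH1 (0, 1, 0) q
      simp only [Dx1]
      linarith
    rw [e1]
    have e2 : Dt (Dx1 b) p = Dx1 (Dt b) p := D_swap hbs _ _ p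
    rw [e2]
    have e3 : Dt b = fun q => K q - (conv u b q
        + (Dx1 (fun r => (u r).1) q + Dx2 (fun r => (u r).2) q)) := by
      funext q
      have h := hbeq q
      simp only [Dt] at h ⊢
      linarith
    rw [e3]
    have e4 : Dx1 (fun q => K q - (conv u b q
          + (Dx1 (fun r => (u r).1) q + Dx2 (fun r => (u r).2) q))) p
        = Dx1 K p - Dx1 (fun q => conv u b q
          + (Dx1 (fun r => (u r).1) q + Dx2 (fun r => (u r).2) q)) p :=
      D_sub hKs ((hconv b hbs).add hS) _ p
    have e5 : Dx1 (fun q => conv u b q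
          + (Dx1 (fun r => (u r).1) q + Dx2 (fun r => (u r).2) q)) p
        = Dx1 (conv u b) p
          + Dx1 (fun q => Dx1 (fun r => (u r).1) q + Dx2 (fun r => (u r).2) q) p :=
      D_add (hconv b hbs) hS _ p
    have e6 : Dx1 (fun q => Dx1 (fun r => (u r).1) q + Dx2 (fun r => (u r).2) q) p
        = Dx1 (Dx1 (fun r => (u r).1)) p + Dx1 (Dx2 (fun r => (u r).2)) p :=
      D_add (smoothD hu1 _) (smoothD hu2 _) _ p
    have e7 : Dx1 (fun q => K q + (M q).1) p = Dx1 K p + Dx1 (fun q => (M q).1) p :=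
      D_add hKs hM1 _ p
    have e9 : Dx1 (fun q => conv u b q + conv u (fun r => (H r).1) q) p
        = Dx1 (conv u b) p + Dx1 (conv u (fun r => (H r).1)) p :=
      D_add (hconv b hbs) (hconv _ hH1) _ p
    rw [e4, e5, e6, e7, conv_add, e9]
    ring
  · -- second component
    have f1 : Dt (fun q => Dx2 (fun r => b r + (H r).1) q - Dx1 (fun r => (H r).2) q) p
        = Dt (Dx2 (fun r => b r + (H r).1)) p - Dt (Dx1 (fun r => (H r).2)) p :=
      D_sub (smoothD hF _) (smoothD hH2 _) _ p
    have f2 : Dt (Dx2 (fun r => b r + (H r).1)) p = Dx2 (Dt (fun r => b r + (H r).1)) p :=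
      D_swap hF _ _ p
    have f3 : Dt (Dx1 (fun r => (H r).2)) p = Dx1 (Dt (fun r => (H r).2)) p :=
      D_swap hH2 _ _ p
    rw [f1, f2, f3]
    have f5 : Dt (fun r => b r + (H r).1) = fun q => (K q + (M q).1)
        - (conv u b q + conv u (fun r => (H r).1) q)
        - ((Dx1 (fun r => (u r).1) q + Dx2 (fun r => (u r).2) q)
          + (Dx1 (fun r => (u r).1) q + Dx2 (fun r => (u r).2) q))
        + Dx1 (fun r => (u r).1) q := by
      funext q
      have h0 : Dt (fun r => b r + (H r).1) q
          = Dt b q + Dt (fun r => (H r).1) q := D_add hbs hH1 _ q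
      have h1 := hbeq q
      have h2 := hH1eq q
      rw [h0]
      linarith
    rw [f5]
    have hA : ContDiff ℝ (⊤ : ℕ∞) (fun q => K q + (M q).1) := hKs.add hM1
    have hB : ContDiff ℝ (⊤ : ℕ∞) (fun q => conv u b q + conv u (fun r => (H r).1) q) :=
      (hconv b hbs).add (hconv _ hH1)
    have hC : ContDiff ℝ (⊤ : ℕ∞) (fun q => (Dx1 (fun r => (u r).1) q + Dx2 (fun r => (u r).2) q)
        + (Dx1 (fun r => (u r).1) q + Dx2 (fun r => (u r).2) q)) := hS.add hS
    have g1 : Dx2 (fun q => (K q + (M q).1)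
          - (conv u b q + conv u (fun r => (H r).1) q)
          - ((Dx1 (fun r => (u r).1) q + Dx2 (fun r => (u r).2) q)
            + (Dx1 (fun r => (u r).1) q + Dx2 (fun r => (u r).2) q))
          + Dx1 (fun r => (u r).1) q) p
        = Dx2 (fun q => (K q + (M q).1)
          - (conv u b q + conv u (fun r => (H r).1) q)
          - ((Dx1 (fun r => (u r).1) q + Dx2 (fun r => (u r).2) q)
            + (Dx1 (fun r => (u r).1) q + Dx2 (fun r => (u r).2) q))) p
          + Dx2 (Dx1 (fun r => (u r).1)) p :=
      D_add ((hA.sub hB).sub hC) (smoothD hu1 _) _ p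
    have g2 : Dx2 (fun q => (K q + (M q).1)
          - (conv u b q + conv u (fun r => (H r).1) q)
          - ((Dx1 (fun r => (u r).1) q + Dx2 (fun r => (u r).2) q)
            + (Dx1 (fun r => (u r).1) q + Dx2 (fun r => (u r).2) q))) p
        = Dx2 (fun q => (K q + (M q).1)
          - (conv u b q + conv u (fun r => (H r).1) q)) p
          - Dx2 (fun q => (Dx1 (fun r => (u r).1) q + Dx2 (fun r => (u r).2) q)
            + (Dx1 (fun r => (u r).1) q + Dx2 (fun r => (u r).2) q)) p :=
      D_sub (hA.sub hB) hC _ p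
    have g3 : Dx2 (fun q => (K q + (M q).1)
          - (conv u b q + conv u (fun r => (H r).1) q)) p
        = Dx2 (fun q => K q + (M q).1) p
          - Dx2 (fun q => conv u b q + conv u (fun r => (H r).1) q) p :=
      D_sub hA hB _ p
    have g4 : Dx2 (fun q => K q + (M q).1) p = Dx2 K p + Dx2 (fun q => (M q).1) p :=
      D_add hKs hM1 _ p
    have g5 : Dx2 (fun q => conv u b q + conv u (fun r => (H r).1) q) p
        = Dx2 (conv u b) p + Dx2 (conv u (fun r => (H r).1)) p :=
      D_add (hconv b hbs) (hconv _ hH1) _ p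
    have g6 : Dx2 (fun q => (Dx1 (fun r => (u r).1) q + Dx2 (fun r => (u r).2) q)
          + (Dx1 (fun r => (u r).1) q + Dx2 (fun r => (u r).2) q)) p
        = Dx2 (fun q => Dx1 (fun r => (u r).1) q + Dx2 (fun r => (u r).2) q) p
          + Dx2 (fun q => Dx1 (fun r => (u r).1) q + Dx2 (fun r => (u r).2) q) p :=
      D_add hS hS _ p
    have g7 : Dx2 (fun q => Dx1 (fun r => (u r).1) q + Dx2 (fun r => (u r).2) q) p
        = Dx2 (Dx1 (fun r => (u r).1)) p + Dx2 (Dx2 (fun r => (u r).2)) p :=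
      D_add (smoothD hu1 _) (smoothD hu2 _) _ p
    have f7 : Dt (fun r => (H r).2) = fun q => (M q).2 - conv u (fun r => (H r).2) q
        + Dx1 (fun r => (u r).2) q := by
      funext q
      have h := hH2eq q
      linarith
    rw [f7]
    have g8 : Dx1 (fun q => (M q).2 - conv u (fun r => (H r).2) q
          + Dx1 (fun r => (u r).2) q) p
        = Dx1 (fun q => (M q).2 - conv u (fun r => (H r).2) q) p
          + Dx1 (Dx1 (fun r => (u r).2)) p :=
      D_add (hM2.sub (hconv _ hH2)) (smoothD hu2 _) _ p
    have g9 : Dx1 (fun q => (M q).2 - conv u (fun r => (H r).2) q) p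
        = Dx1 (fun q => (M q).2) p - Dx1 (conv u (fun r => (H r).2)) p :=
      D_sub hM2 (hconv _ hH2) _ p
    have g10 : Dx2 (fun q => K q + (M q).1) p = Dx2 K p + Dx2 (fun q => (M q).1) p :=
      D_add hKs hM1 _ p
    have g11 : Dx2 (conv u (fun r => b r + (H r).1)) p
        = Dx2 (conv u b) p + Dx2 (conv u (fun r => (H r).1)) p := by
      rw [conv_add]
      exact D_add (hconv b hbs) (hconv _ hH1) _ p
    have gsw : Dx2 (Dx1 (fun r => (u r).1)) p = Dx1 (Dx2 (fun r => (u r).1)) p :=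
      D_swap hu1 _ _ p
    rw [g1, g2, g3, g4, g5, g6, g7, g8, g9, g11, gsw]
    ring
end
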